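/- Every feasible schedule of an instance of P2,S1|s_j,t_j|C_max with n ≥ 1 jobs satisfies C_max ≥ LB_T, where LB_T = max( (min_j s_j + Σ_j A_j + min_j t_j)/2 , Σ_j (A_j − p_j) ); that is, LB_T is a valid lower bound on the optimal makespan. -/

import Mathlib

open Finset

/-- An instance of the problem `P2,S1|s_j,t_j|C_max`: `n` jobs, each with positive
loading time `s j`, processing time `p j`, and unloading time `t j`. -/
structure PInstance (n : ℕ) where
  s : Fin n → ℝ
  p : Fin n → ℝ
  t : Fin n → ℝ
  s_pos : ∀ j, 0 < s j
  p_pos : ∀ j, 0 < p j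
  t_pos : ∀ j, 0 < t j

namespace PInstance

variable {n : ℕ}

/-- The length `A j = s j + p j + t j` of job `j`. -/
def A (I : PInstance n) (j : Fin n) : ℝ := I.s j + I.p j + I.t j

/-- Feasibility of the schedule assigning start time `σ j` and machine `μ j` to job `j`:
start times are nonnegative, machines are in `{1, 2}`, distinct jobs on the same machine
occupy disjoint half-open intervals `[σ j, σ j + A j)`, and the `2n` server intervals
(the loading intervals `[σ j, σ j + s j)` and the unloading intervals
`[σ j + s j + p j, σ j + A j)`) are pairwise disjoint. -/
def Feasible (I : PInstance n) (σ : Fin n → ℝ) (μ : Fin n → ℕ) : Prop :=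
  (∀ j, 0 ≤ σ j) ∧
  (∀ j, μ j = 1 ∨ μ j = 2) ∧
  (∀ i j, i ≠ j → μ i = μ j → σ i + I.A i ≤ σ j ∨ σ j + I.A j ≤ σ i) ∧
  (∀ i j, i ≠ j → σ i + I.s i ≤ σ j ∨ σ j + I.s j ≤ σ i) ∧
  (∀ i j, i ≠ j →
    σ i + I.A i ≤ σ j + I.s j + I.p j ∨ σ j + I.A j ≤ σ i + I.s i + I.p i) ∧
  (∀ i j, σ i + I.s i ≤ σ j + I.s j + I.p j ∨ σ j + I.A j ≤ σ i)

/-- `C` is the makespan of the schedule with start times `σ`: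
`C = max_{j=1,…,n} (σ j + A j)`. -/
def IsMakespan (I : PInstance n) (σ : Fin n → ℝ) (C : ℝ) : Prop :=
  (∀ j, σ j + I.A j ≤ C) ∧ ∃ j, σ j + I.A j = C

end PInstance

/-!
The server is busy during the `2n` pairwise disjoint loading and unloading intervals, all inside
`[0, C_max]`, so `Σ (s j + t j) ≤ C_max`.

For the machine bound, let `a` be the job that starts first and `b` a job that ends at `C_max`.
Since loading intervals are disjoint, every job other than `a` starts after `a` is loaded, hence
at time `≥ min s`; since unloading intervals are disjoint, every job other than `b` ends before
`b` is unloaded, hence at time `≤ C_max - min t`. So one machine is idle on `[0, min s)` and one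
(possibly the same) on `(C_max - min t, C_max]`, and the two machines together provide at most
`2 C_max - min s - min t` units of time for the jobs, whose total length is `Σ A j`.
-/

theorem sum_sub_le_sub_of_pairwise_separated {ι α : Type*} [DecidableEq ι]
    [AddCommGroup α] [LinearOrder α] [IsOrderedAddMonoid α]
    (F : Finset ι) {a b : ι → α} {L U : α} (hLU : L ≤ U) (hab : ∀ i ∈ F, a i < b i)
    (hL : ∀ i ∈ F, L ≤ a i) (hU : ∀ i ∈ F, b i ≤ U)
    (hsep : ∀ i ∈ F, ∀ j ∈ F, i ≠ j → b i ≤ a j ∨ b j ≤ a i) :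
    ∑ i ∈ F, (b i - a i) ≤ U - L := by
  induction F using Finset.induction_on_max_value a generalizing U with
  | empty => simpa using hLU
  | insert j F hjF hmax ih =>
    have hF : ∀ i ∈ F, b i ≤ a j := fun i hi =>
      (hsep i (mem_insert_of_mem hi) j (mem_insert_self j F)
        (ne_of_mem_of_not_mem hi hjF)).resolve_right
        fun h => (h.trans (hmax i hi)).not_gt (hab j (mem_insert_self j F))
    have ih' := ih (hL j (mem_insert_self j F)) (fun i hi => hab i (mem_insert_of_mem hi))
      (fun i hi => hL i (mem_insert_of_mem hi)) hF
      (fun i hi k hk => hsep i (mem_insert_of_mem hi) k (mem_insert_of_mem hk))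
    calc ∑ i ∈ insert j F, (b i - a i) = (b j - a j) + ∑ i ∈ F, (b i - a i) := sum_insert hjF
      _ ≤ (U - a j) + (a j - L) :=
        add_le_add (sub_le_sub_right (hU j (mem_insert_self j F)) _) ih'
      _ = U - L := sub_add_sub_cancel U (a j) L

namespace PInstance

variable {n : ℕ} {I : PInstance n} {σ : Fin n → ℝ} {μ : Fin n → ℕ} {C : ℝ}

theorem A_pos (I : PInstance n) (j : Fin n) : 0 < I.A j := by
  unfold A; linarith [I.s_pos j, I.p_pos j, I.t_pos j]

/-- `inl j` indexes the loading interval of job `j`, `inr j` its unloading interval. -/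
def serverStart (I : PInstance n) (σ : Fin n → ℝ) : Fin n ⊕ Fin n → ℝ :=
  Sum.elim σ fun j => σ j + I.s j + I.p j

def serverEnd (I : PInstance n) (σ : Fin n → ℝ) : Fin n ⊕ Fin n → ℝ :=
  Sum.elim (fun j => σ j + I.s j) fun j => σ j + I.A j

theorem Feasible.server_separated (hfeas : I.Feasible σ μ) (x y : Fin n ⊕ Fin n)
    (hxy : x ≠ y) :
    I.serverEnd σ x ≤ I.serverStart σ y ∨ I.serverEnd σ y ≤ I.serverStart σ x := by
  obtain ⟨-, -, -, hload, hunload, hlu⟩ := hfeas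
  rcases x with i | i <;> rcases y with j | j
  · exact hload i j fun h => hxy (congrArg _ h)
  · exact hlu i j
  · exact (hlu j i).symm
  · exact hunload i j fun h => hxy (congrArg _ h)

theorem IsMakespan.nonneg (hfeas : I.Feasible σ μ) (hC : I.IsMakespan σ C) : 0 ≤ C := by
  obtain ⟨j, hj⟩ := hC.2
  linarith [hfeas.1 j, I.A_pos j]

theorem Feasible.sum_A_sub_p_le (hfeas : I.Feasible σ μ) (hC : I.IsMakespan σ C) :
    ∑ j, (I.A j - I.p j) ≤ C := by
  have hlen : ∀ j, I.A j - I.p j = (I.serverEnd σ (.inl j) - I.serverStart σ (.inl j)) +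
      (I.serverEnd σ (.inr j) - I.serverStart σ (.inr j)) := fun j => by
    simp only [serverEnd, serverStart, Sum.elim_inl, Sum.elim_inr, A]; ring
  have hstart : ∀ x ∈ univ, 0 ≤ I.serverStart σ x := by
    rintro (j | j) - <;> simp only [serverStart, Sum.elim_inl, Sum.elim_inr]
    · exact hfeas.1 j
    · linarith [hfeas.1 j, I.s_pos j, I.p_pos j]
  have hend : ∀ x ∈ univ, I.serverEnd σ x ≤ C := by
    rintro (j | j) - <;> simp only [serverEnd, Sum.elim_inl, Sum.elim_inr]
    · linarith [hC.1 j, I.p_pos j, I.t_pos j, show I.A j = I.s j + I.p j + I.t j from rfl]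
    · exact hC.1 j
  have hlt : ∀ x ∈ univ, I.serverStart σ x < I.serverEnd σ x := by
    rintro (j | j) - <;> simp only [serverStart, serverEnd, Sum.elim_inl, Sum.elim_inr, A]
    · linarith [I.s_pos j]
    · linarith [I.t_pos j]
  calc ∑ j, (I.A j - I.p j)
      = ∑ x, (I.serverEnd σ x - I.serverStart σ x) := by
        rw [Fintype.sum_sum_type, ← sum_add_distrib]; exact sum_congr rfl fun j _ => hlen j
    _ ≤ C - 0 := sum_sub_le_sub_of_pairwise_separated univ (hC.nonneg hfeas) hlt hstart hend
        fun x _ y _ => hfeas.server_separated x y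
    _ = C := sub_zero C

theorem Feasible.add_s_le_of_ne_of_forall_le (hfeas : I.Feasible σ μ) {a j : Fin n}
    (ha : ∀ i, σ a ≤ σ i) (hj : j ≠ a) : σ a + I.s a ≤ σ j :=
  (hfeas.2.2.2.1 a j hj.symm).resolve_right fun h => by linarith [ha j, I.s_pos j]

theorem Feasible.add_t_le_of_ne_of_forall_le (hfeas : I.Feasible σ μ) {b j : Fin n}
    (hb : ∀ i, σ i + I.A i ≤ σ b + I.A b) (hj : j ≠ b) :
    σ j + I.A j + I.t b ≤ σ b + I.A b := by
  rcases hfeas.2.2.2.2.1 j b hj with h | h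
  · unfold A at *; linarith
  · unfold A at *; linarith [hb j, I.t_pos j]

theorem Feasible.sum_A_le_of_machine (hfeas : I.Feasible σ μ) (m : ℕ) {L U : ℝ} (hLU : L ≤ U)
    (hL : ∀ j, μ j = m → L ≤ σ j) (hU : ∀ j, μ j = m → σ j + I.A j ≤ U) :
    ∑ j with μ j = m, I.A j ≤ U - L := by
  simpa using sum_sub_le_sub_of_pairwise_separated {j | μ j = m} (a := σ)
    (b := fun j => σ j + I.A j) hLU (fun j _ => lt_add_of_pos_right _ (I.A_pos j))
    (fun j hj => hL j (mem_filter.1 hj).2) (fun j hj => hU j (mem_filter.1 hj).2)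
    fun i hi j hj hij => hfeas.2.2.1 i j hij ((mem_filter.1 hi).2.trans (mem_filter.1 hj).2.symm)

theorem Feasible.add_sum_A_add_le (hfeas : I.Feasible σ μ) (hC : I.IsMakespan σ C)
    {ms mt : ℝ} (hms : ∀ j, ms ≤ I.s j) (hmt : ∀ j, mt ≤ I.t j) :
    ms + ∑ j, I.A j + mt ≤ 2 * C := by
  obtain ⟨hCle, b, hb⟩ := hC
  obtain ⟨a, -, ha⟩ := univ.exists_min_image σ ⟨b, mem_univ b⟩
  have hCb : C = σ b + I.s b + I.p b + I.t b := by rw [← hb, A]; ring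
  have hstart : ∀ j, j ≠ a → ms ≤ σ j := fun j hj => by
    linarith [hfeas.add_s_le_of_ne_of_forall_le (fun i => ha i (mem_univ i)) hj, hfeas.1 a, hms a]
  have hend : ∀ j, j ≠ b → σ j + I.A j ≤ C - mt := fun j hj => by
    linarith [hfeas.add_t_le_of_ne_of_forall_le (fun i => hb ▸ hCle i) hj, hmt b]
  -- `L m` and `U m` bound the time window that machine `m` has for its jobs.
  set L : ℕ → ℝ := fun m => if μ a = m then 0 else ms
  set U : ℕ → ℝ := fun m => if μ b = m then C else C - mt
  have hmachine : ∀ m, ∑ j with μ j = m, I.A j ≤ U m - L m := fun m => by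
    refine hfeas.sum_A_le_of_machine m ?_ (fun j hj => ?_) (fun j hj => ?_) <;>
      simp only [L, U] <;> split_ifs with h
    any_goals linarith [hfeas.1 b, I.s_pos b, I.p_pos b, I.t_pos b, hms b, hmt b]
    · exact hfeas.1 j
    · exact hstart j fun hja => h (hja ▸ hj)
    · exact hCle j
    · exact hend j fun hjb => h (hjb ▸ hj)
  have hsplit : ∑ j, I.A j = ∑ j with μ j = 1, I.A j + ∑ j with μ j = 2, I.A j := by
    rw [← sum_fiberwise_of_maps_to (t := {1, 2}) (g := μ) fun j _ => by
      simpa using hfeas.2.1 j, sum_pair (by norm_num : (1 : ℕ) ≠ 2)]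
  have h1 := hmachine 1
  have h2 := hmachine 2
  rcases hfeas.2.1 a with ha' | ha' <;> rcases hfeas.2.1 b with hb' | hb' <;>
    simp only [L, U, ha', hb'] at h1 h2 <;> norm_num at h1 h2 <;> linarith

end PInstance

/-- Every feasible schedule of an instance with `n ≥ 1` jobs satisfies
`C_max ≥ LB_T = max( (min_j s j + Σ_j A j + min_j t j)/2 , Σ_j (A j − p j) )`. -/
theorem lower_bound_LBT {n : ℕ} (hn : 0 < n) (I : PInstance n)
    (σ : Fin n → ℝ) (μ : Fin n → ℕ)
    (hfeas : I.Feasible σ μ) (Cmax : ℝ) (hC : I.IsMakespan σ Cmax) :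
    max ((Finset.univ.inf' ⟨⟨0, hn⟩, Finset.mem_univ _⟩ I.s + (∑ j, I.A j) +
          Finset.univ.inf' ⟨⟨0, hn⟩, Finset.mem_univ _⟩ I.t) / 2)
        (∑ j, (I.A j - I.p j)) ≤ Cmax := by
  refine max_le ?_ (hfeas.sum_A_sub_p_le hC)
  have hne : (univ : Finset (Fin n)).Nonempty := ⟨⟨0, hn⟩, mem_univ _⟩
  have := hfeas.add_sum_A_add_le hC (ms := univ.inf' hne I.s) (mt := univ.inf' hne I.t)
    (fun j => inf'_le I.s (mem_univ j)) (fun j => inf'_le I.t (mem_univ j))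
  linarith
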